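/- Let n ≥ 3, N ≥ 1 be integers and let 0 < α < 1. Then the following are equivalent: (i) there exists a set X ⊆ S^{n-1} ⊆ ℝ^n with |X| = N such that ⟨x, y⟩ ∈ {α, −α} for all distinct x, y ∈ X; (ii) there exists a set Y ⊆ S^{n-2} ⊆ ℝ^{n-1} with |Y| = N − 1 such that ⟨x, y⟩ ∈ {α/(1+α), −α/(1−α)} for all distinct x, y ∈ Y. Moreover, if 1/2 < α < 1, then Y in (ii) may be taken with ⟨x, y⟩ = α/(1+α) for all distinct x, y ∈ Y. -/

import Mathlib

open scoped BigOperators Classical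

/-- There are `N` unit vectors in `ℝ^m` whose pairwise inner products all lie in `S`. -/
def ExistsSphericalCode (m N : ℕ) (S : Set ℝ) : Prop :=
  ∃ X : Finset (Fin m → ℝ), X.card = N ∧ (∀ x ∈ X, ∑ i, x i ^ 2 = 1) ∧
    ∀ x ∈ X, ∀ y ∈ X, x ≠ y → (∑ i, x i * y i) ∈ S

local notation "⟪" x ", " y "⟫" => @inner ℝ _ _ x y

lemma euclid_inner_eq {k : ℕ} (x y : EuclideanSpace ℝ (Fin k)) :
    ⟪x, y⟫ = ∑ i, x i * y i := by
  simp [PiLp.inner_apply, RCLike.inner_apply]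
  exact Finset.sum_congr rfl (fun i _ => mul_comm _ _)

lemma euclid_inner_self {k : ℕ} (x : EuclideanSpace ℝ (Fin k)) :
    ⟪x, x⟫ = ∑ i, x i ^ 2 := by
  rw [euclid_inner_eq]; exact Finset.sum_congr rfl (fun i _ => (sq _).symm)

def toE {k : ℕ} (x : Fin k → ℝ) : EuclideanSpace ℝ (Fin k) := WithLp.toLp 2 x

@[simp] lemma toE_apply {k : ℕ} (x : Fin k → ℝ) (i : Fin k) : toE x i = x i := rfl

lemma musin_forward (m N : ℕ) (hN : 1 ≤ N) (α : ℝ) (hα0 : 0 < α) (hα1 : α < 1)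
    (h : ExistsSphericalCode (m + 1) N {α, -α}) :
    ExistsSphericalCode m (N - 1) {α / (1 + α), -α / (1 - α)} := by
  classical
  obtain ⟨X, hcard, hunit, hinner⟩ := h
  have hXne : X.Nonempty := Finset.card_pos.1 (by omega)
  obtain ⟨e, he⟩ := hXne
  have hu : ∀ x ∈ X, ⟪toE x, toE x⟫ = 1 := by
    intro x hx; rw [euclid_inner_self]; exact hunit x hx
  have hi : ∀ x ∈ X, ∀ y ∈ X, x ≠ y →
      ⟪toE x, toE y⟫ = α ∨ ⟪toE x, toE y⟫ = -α := by
    intro x hx y hy hxy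
    have h0 := hinner x hx y hy hxy
    rw [euclid_inner_eq]
    simpa using h0
  have hanti : ∀ x ∈ X, ∀ y ∈ X, x ≠ y → toE y ≠ -toE x := by
    intro x hx y hy hxy hcon
    have h1 : ⟪toE x, toE y⟫ = -1 := by
      rw [hcon, inner_neg_right, hu x hx]
    rcases hi x hx y hy hxy with h2 | h2 <;> rw [h1] at h2 <;> linarith
  set s : (Fin (m + 1) → ℝ) → EuclideanSpace ℝ (Fin (m + 1)) :=
      fun x => if ⟪toE e, toE x⟫ = α then toE x else -toE x with hs
  have hse : ∀ x ∈ X.erase e, ⟪toE e, s x⟫ = α := by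
    intro x hx
    obtain ⟨hxe, hxX⟩ := Finset.mem_erase.1 hx
    simp only [hs]
    split_ifs with hcond
    · exact hcond
    · rcases hi e he x hxX (Ne.symm hxe) with h1 | h1
      · exact absurd h1 hcond
      · rw [inner_neg_right, h1, neg_neg]
  have hsval : ∀ x, s x = toE x ∨ s x = -toE x := by
    intro x; simp only [hs]; split_ifs
    · exact Or.inl rfl
    · exact Or.inr rfl
  have hss : ∀ x ∈ X, ∀ y ∈ X, x ≠ y → ⟪s x, s y⟫ = α ∨ ⟪s x, s y⟫ = -α := by
    intro x hx y hy hxy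
    have hb := hi x hx y hy hxy
    rcases hsval x with h1 | h1 <;> rcases hsval y with h2 | h2 <;> rw [h1, h2]
    · exact hb
    · rw [inner_neg_right]
      rcases hb with h3 | h3 <;> rw [h3] <;> simp
    · rw [inner_neg_left]
      rcases hb with h3 | h3 <;> rw [h3] <;> simp
    · rw [inner_neg_left, inner_neg_right, neg_neg]; exact hb
  have hsu : ∀ x ∈ X, ⟪s x, s x⟫ = 1 := by
    intro x hx
    rcases hsval x with h1 | h1 <;> rw [h1]
    · exact hu x hx
    · rw [inner_neg_left, inner_neg_right, neg_neg]; exact hu x hx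
  have hsinj : ∀ x ∈ X, ∀ y ∈ X, s x = s y → x = y := by
    intro x hx y hy hsxy
    by_contra hxy
    rcases hsval x with h1 | h1 <;> rcases hsval y with h2 | h2 <;>
      rw [h1, h2] at hsxy
    · exact hxy (congrArg WithLp.ofLp hsxy)
    · exact hanti x hx y hy hxy (by rw [hsxy, neg_neg])
    · exact hanti x hx y hy hxy hsxy.symm
    · exact hxy (congrArg WithLp.ofLp (neg_injective hsxy))
  set β : ℝ := Real.sqrt (1 - α ^ 2) with hβ
  have hβsq : β ^ 2 = 1 - α ^ 2 := Real.sq_sqrt (by nlinarith)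
  have hβpos : 0 < β := Real.sqrt_pos.2 (by nlinarith)
  set f : (Fin (m + 1) → ℝ) → EuclideanSpace ℝ (Fin (m + 1)) :=
      fun x => β⁻¹ • (s x - α • toE e) with hf
  have hee : ⟪toE e, toE e⟫ = 1 := hu e he
  have hfK : ∀ x ∈ X.erase e, f x ∈ (ℝ ∙ toE e)ᗮ := by
    intro x hx
    rw [Submodule.mem_orthogonal_singleton_iff_inner_right]
    simp only [hf]
    rw [real_inner_smul_right, inner_sub_right, real_inner_smul_right, hse x hx, hee]
    ring
  have hfinner : ∀ x y, x ∈ X.erase e → y ∈ X.erase e →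
      ⟪f x, f y⟫ = β⁻¹ ^ 2 * (⟪s x, s y⟫ - α ^ 2) := by
    intro x y hx hy
    have h1 : ⟪s x, toE e⟫ = α := by rw [real_inner_comm]; exact hse x hx
    simp only [hf]
    rw [real_inner_smul_left, real_inner_smul_right, inner_sub_left, inner_sub_right,
      inner_sub_right, real_inner_smul_right, real_inner_smul_right, real_inner_smul_left,
      real_inner_smul_left, h1, hse y hy, hee]
    ring
  haveI : Fact (Module.finrank ℝ (EuclideanSpace ℝ (Fin (m + 1))) = m + 1) :=
    ⟨finrank_euclideanSpace_fin⟩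
  have he0 : toE e ≠ 0 := by
    intro hc
    rw [hc, inner_zero_right] at hee
    linarith
  set Φ := (OrthonormalBasis.fromOrthogonalSpanSingleton (𝕜 := ℝ) m he0).repr with hΦ
  set g : {x // x ∈ X.erase e} → (Fin m → ℝ) := fun x => Φ ⟨f x.1, hfK x.1 x.2⟩ with hg
  have hginner : ∀ x y : {x // x ∈ X.erase e},
      ∑ i, g x i * g y i = ⟪f x.1, f y.1⟫ := by
    intro x y
    have := euclid_inner_eq (Φ ⟨f x.1, hfK x.1 x.2⟩) (Φ ⟨f y.1, hfK y.1 y.2⟩)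
    rw [Φ.inner_map_map] at this
    exact this.symm
  have hginj : Function.Injective g := by
    intro x y hxy
    simp only [hg] at hxy
    have h1 : f x.1 = f y.1 := congrArg Subtype.val (Φ.injective (by exact congrArg (WithLp.toLp 2) hxy : Φ ⟨f x.1, hfK x.1 x.2⟩ = Φ ⟨f y.1, hfK y.1 y.2⟩))
    simp only [hf] at h1
    have h2 : s x.1 = s y.1 := by
      have := smul_right_injective (EuclideanSpace ℝ (Fin (m + 1)))
        (inv_ne_zero (ne_of_gt hβpos)) h1
      exact sub_left_injective this
    exact Subtype.ext (hsinj x.1 (Finset.mem_of_mem_erase x.2) y.1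
      (Finset.mem_of_mem_erase y.2) h2)
  refine ⟨(X.erase e).attach.image g, ?_, ?_, ?_⟩
  · rw [Finset.card_image_of_injective _ hginj, Finset.card_attach,
      Finset.card_erase_of_mem he, hcard]
  · intro z hz
    obtain ⟨x, _, rfl⟩ := Finset.mem_image.1 hz
    have hne : (1:ℝ) - α ^ 2 ≠ 0 := by nlinarith
    rw [show ∑ i, g x i ^ 2 = ∑ i, g x i * g x i from Finset.sum_congr rfl (fun i _ => sq _), hginner x x,
      hfinner x.1 x.1 x.2 x.2, hsu x.1 (Finset.mem_of_mem_erase x.2), ← hβsq]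
    field_simp
  · intro z hz w hw hzw
    obtain ⟨x, _, rfl⟩ := Finset.mem_image.1 hz
    obtain ⟨y, _, rfl⟩ := Finset.mem_image.1 hw
    have hxy : x.1 ≠ y.1 := by
      intro hc
      exact hzw (congrArg g (Subtype.ext hc))
    rw [hginner x y, hfinner x.1 y.1 x.2 y.2]
    have h1 : (1:ℝ) + α ≠ 0 := by linarith
    have h2 : (1:ℝ) - α ≠ 0 := by linarith
    have hne : (1:ℝ) - α ^ 2 ≠ 0 := by nlinarith
    have hβ2 : β⁻¹ ^ 2 = (1 - α ^ 2)⁻¹ := by rw [← hβsq]; field_simp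
    simp only [Set.mem_insert_iff, Set.mem_singleton_iff]
    rcases hss x.1 (Finset.mem_of_mem_erase x.2) y.1 (Finset.mem_of_mem_erase y.2) hxy
      with h3 | h3 <;> rw [h3, hβ2]
    · left; field_simp; ring
    · right; field_simp; ring

lemma musin_backward (m N : ℕ) (hN : 1 ≤ N) (α : ℝ) (hα0 : 0 < α) (hα1 : α < 1)
    (h : ExistsSphericalCode m (N - 1) {α / (1 + α), -α / (1 - α)}) :
    ExistsSphericalCode (m + 1) N {α, -α} := by
  obtain ⟨Y, hcard, hunit, hinner⟩ := h
  set β : ℝ := Real.sqrt (1 - α ^ 2) with hβ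
  have hβsq : β ^ 2 = 1 - α ^ 2 := Real.sq_sqrt (by nlinarith)
  have hβpos : 0 < β := Real.sqrt_pos.2 (by nlinarith)
  set L : (Fin m → ℝ) → (Fin (m + 1) → ℝ) := fun y => Fin.snoc (fun i => β * y i) α with hL
  set e : Fin (m + 1) → ℝ := Fin.snoc (fun _ => 0) 1 with he
  have hLinj : Function.Injective L := by
    intro y y' hyy'
    funext i
    have := congrFun hyy' i.castSucc
    simp only [hL, Fin.snoc_castSucc] at this
    exact mul_left_cancel₀ (ne_of_gt hβpos) this
  have heL : ∀ y, e ≠ L y := by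
    intro y hy
    have := congrFun hy (Fin.last m)
    simp only [hL, he, Fin.snoc_last] at this
    exact absurd this.symm (ne_of_lt hα1)
  have hLe_inner : ∀ y : Fin m → ℝ, ∑ i, L y i * e i = α := by
    intro y
    rw [Fin.sum_univ_castSucc]
    simp [hL, he]
  have heL_inner : ∀ y : Fin m → ℝ, ∑ i, e i * L y i = α := by
    intro y
    rw [Fin.sum_univ_castSucc]
    simp [hL, he]
  have hLL_inner : ∀ y y' : Fin m → ℝ, ∑ i, L y i * L y' i = β ^ 2 * (∑ i, y i * y' i) + α ^ 2 := by
    intro y y'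
    rw [Fin.sum_univ_castSucc]
    simp only [hL, Fin.snoc_castSucc, Fin.snoc_last, Finset.mul_sum]
    ring_nf
  refine ⟨insert e (Y.image L), ?_, ?_, ?_⟩
  · rw [Finset.card_insert_of_notMem, Finset.card_image_of_injective _ hLinj, hcard]
    · omega
    · simp only [Finset.mem_image, not_exists]
      rintro y ⟨_, hy⟩
      exact heL y hy.symm
  · intro x hx
    rcases Finset.mem_insert.1 hx with rfl | hx
    · rw [Fin.sum_univ_castSucc]; simp [he]
    · obtain ⟨y, hy, rfl⟩ := Finset.mem_image.1 hx
      have h1 : ∑ i, L y i ^ 2 = β ^ 2 * (∑ i, y i * y i) + α ^ 2 := by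
        rw [← hLL_inner]
        exact Finset.sum_congr rfl (fun i _ => sq _)
      have h2 : ∑ i, y i * y i = 1 := by
        rw [← hunit y hy]
        exact Finset.sum_congr rfl (fun i _ => (sq _).symm)
      rw [h1, h2, hβsq]; ring
  · intro x hx y hy hxy
    rcases Finset.mem_insert.1 hx with rfl | hx
    · rcases Finset.mem_insert.1 hy with rfl | hy
      · exact absurd rfl hxy
      · obtain ⟨y', _, rfl⟩ := Finset.mem_image.1 hy
        exact Or.inl (heL_inner y')
    · obtain ⟨x', hx', rfl⟩ := Finset.mem_image.1 hx
      rcases Finset.mem_insert.1 hy with rfl | hy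
      · exact Or.inl (hLe_inner x')
      · obtain ⟨y', hy', rfl⟩ := Finset.mem_image.1 hy
        have hne : x' ≠ y' := fun hxy' => hxy (by rw [hxy'])
        have hmem := hinner x' hx' y' hy' hne
        have h1 : (1:ℝ) + α ≠ 0 := by linarith
        have h2 : (1:ℝ) - α ≠ 0 := by linarith
        rw [hLL_inner, hβsq]
        simp only [Set.mem_insert_iff, Set.mem_singleton_iff] at hmem ⊢
        rcases hmem with h | h
        · left; rw [h]; field_simp; ring
        · right; rw [h]; field_simp; ring

lemma musin_refine (m M : ℕ) (a b : ℝ) (hb : b < -1)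
    (h : ExistsSphericalCode m M {a, b}) : ExistsSphericalCode m M {a} := by
  obtain ⟨X, hcard, hunit, hinner⟩ := h
  refine ⟨X, hcard, hunit, ?_⟩
  intro x hx y hy hxy
  have hge : -1 ≤ ∑ i, x i * y i := by
    have hx1 : ‖toE x‖ = 1 := by
      have h1 : ⟪toE x, toE x⟫ = 1 := by rw [euclid_inner_self]; exact hunit x hx
      have h2 := real_inner_self_eq_norm_mul_norm (toE x)
      nlinarith [norm_nonneg (toE x)]
    have hy1 : ‖toE y‖ = 1 := by
      have h1 : ⟪toE y, toE y⟫ = 1 := by rw [euclid_inner_self]; exact hunit y hy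
      have h2 := real_inner_self_eq_norm_mul_norm (toE y)
      nlinarith [norm_nonneg (toE y)]
    have h3 : |⟪toE x, toE y⟫| ≤ 1 := by
      calc |⟪toE x, toE y⟫| ≤ ‖toE x‖ * ‖toE y‖ := abs_real_inner_le_norm _ _
      _ = 1 := by rw [hx1, hy1]; ring
    have h4 : ⟪toE x, toE y⟫ = ∑ i, x i * y i := by
      rw [euclid_inner_eq]; rfl
    rw [← h4]
    have := abs_le.1 h3
    linarith [this.1]
  rcases hinner x hx y hy hxy with h1 | h1
  · exact h1
  · rw [Set.mem_singleton_iff] at h1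
    rw [h1] at hge
    linarith

/-- Musin's lemma: for `n ≥ 3`, `N ≥ 1` and `0 < α < 1`, there exist `N` unit
vectors in `ℝ^n` with pairwise inner products in `{α, -α}` iff there exist `N - 1` unit
vectors in `ℝ^{n-1}` with pairwise inner products in `{α/(1+α), -α/(1-α)}`; moreover if
`1/2 < α`, the latter set may be taken with all inner products equal to `α/(1+α)`. -/
theorem musin_lemma (n N : ℕ) (hn : 3 ≤ n) (hN : 1 ≤ N) (α : ℝ) (hα0 : 0 < α) (hα1 : α < 1) :
    (ExistsSphericalCode n N {α, -α} ↔
      ExistsSphericalCode (n - 1) (N - 1) {α / (1 + α), -α / (1 - α)}) ∧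
    (1 / 2 < α → ExistsSphericalCode n N {α, -α} →
      ExistsSphericalCode (n - 1) (N - 1) {α / (1 + α)}) := by
  obtain ⟨m, rfl⟩ : ∃ m, n = m + 1 := ⟨n - 1, by omega⟩
  simp only [Nat.add_sub_cancel]
  refine ⟨⟨musin_forward m N hN α hα0 hα1, musin_backward m N hN α hα0 hα1⟩, ?_⟩
  intro hhalf hcode
  refine musin_refine m (N - 1) _ _ ?_ (musin_forward m N hN α hα0 hα1 hcode)
  rw [div_lt_iff₀ (by linarith : (0:ℝ) < 1 - α)]
  linarith
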